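/- Let F be a finite-dimensional Hilbert space, and let Φ, Ψ : 𝔻 → B(F) be analytic functions satisfying Φ(z)Ψ(z) = zI = Ψ(z)Φ(z) for all z in the open unit disc. If (z̄₁, z̄₂) ∈ 𝔻² is a joint eigenvalue of (M_Φ*, M_Ψ*) on the vector-valued Hardy space H²(F), then (z₁, z₂) is a joint eigenvalue of the commuting pair of matrices (Φ(z₁z₂), Ψ(z₁z₂)), and conversely. -/

import Mathlib

/-!
Since `Φ(z)Ψ(z) = z`, the product `M_Φ M_Ψ` is the shift, so a joint eigenvector `f` of
`(M_Φ*, M_Ψ*)` for `(z̄₁, z̄₂)` is an eigenvector of the backward shift for `w̄`, `w = z₁z₂`. Its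
Taylor coefficients are then geometric, i.e. `f = k_w ⊗ x`; as `M_Φ*(k_w ⊗ x) = k_w ⊗ Φ(w)*x`, the
joint eigenvectors are exactly the `k_w ⊗ x` with `x` a joint eigenvector of `(Φ(w)*, Ψ(w)*)`.

For `A, B` with `AB = BA = z₁z₂`, the joint eigenspace of `(A*, B*)` for `(z̄₁, z̄₂)` is the
orthogonal complement of `range (A - z₁) + range (B - z₂)`. If `z₁ ≠ 0` this sum is
`range (A - z₁)`, because `(A - z₁)B = -z₁(B - z₂)`, and it is proper when `z₁` is an eigenvalue
of `A`. If `z₁ = z₂ = 0`, then `AB = BA = 0` gives `range A* ∩ range B* ⊆ ker A* ∩ ker B*`; were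
the latter zero, a dimension count would give `range A* + range B* = F`, i.e. `ker A ∩ ker B = 0`.
Applied to `(A*, B*)`, this also gives the converse.
-/

open ContinuousLinearMap

noncomputable section

/-- The vector-valued Hardy space `H²(F)` modelled as the `ℓ²`-space of Taylor
coefficients. -/
abbrev HardyH2 (n : ℕ) := lp (fun _ : ℕ => EuclideanSpace ℂ (Fin n)) 2

/-- Evaluation of an element of `H²(F)` at a point of the open unit disc. -/
def evalH2 {n : ℕ} (f : HardyH2 n) (z : ℂ) : EuclideanSpace ℂ (Fin n) :=
  ∑' k : ℕ, z ^ k • (f k)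

open scoped ComplexConjugate InnerProductSpace

def HasJointEigenvalue {R M : Type*} [Zero M] [SMul R M] (A B : M → M) (a b : R) : Prop :=
  ∃ v : M, v ≠ 0 ∧ A v = a • v ∧ B v = b • v

section LinearAlgebra

theorem LinearMap.sup_range_eq_top_of_inf_ker_eq_bot {K V : Type*} [DivisionRing K]
    [AddCommGroup V] [Module K V] [FiniteDimensional K V] {S T : V →ₗ[K] V}
    (hST : S ∘ₗ T = 0) (hTS : T ∘ₗ S = 0) (h : ker S ⊓ ker T = ⊥) :
    range S ⊔ range T = ⊤ := by
  have h_inf : range S ⊓ range T = ⊥ := by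
    rw [eq_bot_iff, ← h, inf_comm (ker S)]
    exact inf_le_inf (range_le_ker_iff.2 hTS) (range_le_ker_iff.2 hST)
  apply Submodule.eq_top_of_finrank_eq
  have h_range := Submodule.finrank_sup_add_finrank_inf_eq (range S) (range T)
  have h_ker := Submodule.finrank_sup_add_finrank_inf_eq (ker S) (ker T)
  rw [h_inf, finrank_bot] at h_range
  rw [h, finrank_bot] at h_ker
  have := Submodule.finrank_le (range S ⊔ range T)
  have := Submodule.finrank_le (ker S ⊔ ker T)
  have := finrank_range_add_finrank_ker S
  have := finrank_range_add_finrank_ker T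
  omega

theorem Module.End.sup_range_sub_smul_ne_top {K V : Type*} [Field K] [AddCommGroup V]
    [Module K V] [FiniteDimensional K V] {A B : Module.End K V} {a b : K} (ha : a ≠ 0)
    (hAB : A * B = (a * b) • 1) {v : V} (hv : v ≠ 0) (hAv : A v = a • v) :
    LinearMap.range (A - a • 1) ⊔ LinearMap.range (B - b • 1) ≠ ⊤ := by
  have h_factor : B - b • 1 = (A - a • 1) * (-a⁻¹ • B) := by
    rw [sub_mul, mul_smul_comm, mul_smul_comm, hAB, smul_mul_assoc, one_mul, smul_smul,
      smul_smul, neg_mul, inv_mul_cancel_left₀ ha, neg_mul, inv_mul_cancel₀ ha]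
    module
  rw [h_factor, sup_eq_left.2 (LinearMap.range_comp_le_range _ _), Ne, LinearMap.range_eq_top,
    ← LinearMap.injective_iff_surjective, injective_iff_map_eq_zero]
  intro h_inj
  exact hv (h_inj v (by simp [hAv]))

variable {𝕜 E : Type*} [RCLike 𝕜] [NormedAddCommGroup E] [InnerProductSpace 𝕜 E]

theorem ContinuousLinearMap.inf_ker_adjoint_eq_orthogonal_sup_range [CompleteSpace E]
    (A B : E →L[𝕜] E) :
    (adjoint A : E →ₗ[𝕜] E).ker ⊓ (adjoint B : E →ₗ[𝕜] E).ker =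
      ((A : E →ₗ[𝕜] E).range ⊔ (B : E →ₗ[𝕜] E).range)ᗮ := by
  rw [← orthogonal_range, ← orthogonal_range, Submodule.inf_orthogonal]

theorem ContinuousLinearMap.inf_ker_eq_bot_of_sup_range_eq_top [FiniteDimensional 𝕜 E]
    {A B : E →L[𝕜] E} (hAB : A ∘L B = 0) (hBA : B ∘L A = 0)
    (h : (A : E →ₗ[𝕜] E).range ⊔ (B : E →ₗ[𝕜] E).range = ⊤) :
    (A : E →ₗ[𝕜] E).ker ⊓ (B : E →ₗ[𝕜] E).ker = ⊥ := by
  have := FiniteDimensional.complete 𝕜 E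
  have h_adj : (adjoint A : E →ₗ[𝕜] E).ker ⊓ (adjoint B : E →ₗ[𝕜] E).ker = ⊥ := by
    rw [inf_ker_adjoint_eq_orthogonal_sup_range, h, Submodule.top_orthogonal_eq_bot]
  have h_top :
      (adjoint A : E →ₗ[𝕜] E).range ⊔ (adjoint B : E →ₗ[𝕜] E).range = ⊤ := by
    refine LinearMap.sup_range_eq_top_of_inf_ker_eq_bot ?_ ?_ h_adj
    · rw [← toLinearMap_comp, ← adjoint_comp, hBA, map_zero, toLinearMap_zero]
    · rw [← toLinearMap_comp, ← adjoint_comp, hAB, map_zero, toLinearMap_zero]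
  simpa [h_top] using inf_ker_adjoint_eq_orthogonal_sup_range (adjoint A) (adjoint B)

variable [CompleteSpace E] [FiniteDimensional 𝕜 E]

theorem hasJointEigenvalue_adjoint_iff_sup_range_ne_top
    (A B : E →L[𝕜] E) (a b : 𝕜) :
    HasJointEigenvalue (adjoint A) (adjoint B) (conj a) (conj b) ↔
      (↑A - a • 1 : E →ₗ[𝕜] E).range ⊔ (↑B - b • 1 : E →ₗ[𝕜] E).range ≠ ⊤ := by
  have h := inf_ker_adjoint_eq_orthogonal_sup_range (A - a • 1) (B - b • 1)
  rw [Ne, ← Submodule.orthogonal_eq_bot_iff, ← Ne, Submodule.ne_bot_iff]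
  push_cast [map_sub, map_smulₛₗ, adjoint_one] at h
  simp only [HasJointEigenvalue, ← h, Submodule.mem_inf, LinearMap.mem_ker, LinearMap.sub_apply,
    LinearMap.smul_apply, Module.End.one_apply, coe_coe, sub_eq_zero]
  exact exists_congr fun x => and_comm

theorem HasJointEigenvalue.adjoint {A B : E →L[𝕜] E} {a b : 𝕜}
    (hAB : A ∘L B = (a * b) • 1) (hBA : B ∘L A = (a * b) • 1)
    (h : HasJointEigenvalue A B a b) :
    HasJointEigenvalue (adjoint A) (adjoint B) (conj a) (conj b) := by
  obtain ⟨v, hv, hAv, hBv⟩ := h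
  rw [hasJointEigenvalue_adjoint_iff_sup_range_ne_top]
  have h_end (S T : E →L[𝕜] E) (c : 𝕜) (h : S ∘L T = c • 1) :
      (S : Module.End 𝕜 E) * T = c • 1 :=
    congrArg (fun U : E →L[𝕜] E => (U : E →ₗ[𝕜] E)) h
  rcases ne_or_eq a 0 with ha | rfl
  · exact Module.End.sup_range_sub_smul_ne_top ha (h_end _ _ _ hAB) hv hAv
  rcases ne_or_eq b 0 with hb | rfl
  · rw [sup_comm]
    exact Module.End.sup_range_sub_smul_ne_top hb (by rw [h_end _ _ _ hBA, mul_comm]) hv hBv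
  simp only [zero_smul, sub_zero, ne_eq]
  intro h_top
  have h_ker := inf_ker_eq_bot_of_sup_range_eq_top (by simpa using hAB) (by simpa using hBA) h_top
  exact hv ((Submodule.eq_bot_iff _).1 h_ker v ⟨by simpa using hAv, by simpa using hBv⟩)

theorem hasJointEigenvalue_adjoint_iff {A B : E →L[𝕜] E} {a b : 𝕜}
    (hAB : A ∘L B = (a * b) • 1) (hBA : B ∘L A = (a * b) • 1) :
    HasJointEigenvalue (adjoint A) (adjoint B) (conj a) (conj b) ↔
      HasJointEigenvalue A B a b := by
  refine ⟨fun h => ?_, HasJointEigenvalue.adjoint hAB hBA⟩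
  have h_adj (S T : E →L[𝕜] E) (h : T ∘L S = (a * b) • 1) :
      adjoint S ∘L adjoint T = (conj a * conj b) • 1 := by
    rw [← adjoint_comp, h, map_smulₛₗ, adjoint_one, map_mul]
  simpa using HasJointEigenvalue.adjoint (h_adj A B hBA) (h_adj B A hAB) h

end LinearAlgebra

section PowerSeries

variable {𝕜 E : Type*} [NontriviallyNormedField 𝕜] [NormedAddCommGroup E] [NormedSpace 𝕜 E]
  [CompleteSpace E] {c d : ℕ → E} {M : ℝ}

theorem summable_pow_smul_of_norm_le (hc : ∀ k, ‖c k‖ ≤ M) {z : 𝕜} (hz : ‖z‖ < 1) :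
    Summable fun k => z ^ k • c k := by
  refine .of_norm_bounded ((summable_geometric_of_lt_one (norm_nonneg z) hz).mul_right M) ?_
  intro k
  rw [norm_smul, norm_pow]
  exact mul_le_mul_of_nonneg_left (hc k) (by positivity)

theorem hasFPowerSeriesAt_tsum_pow_smul (hc : ∀ k, ‖c k‖ ≤ M) :
    HasFPowerSeriesAt (fun z : 𝕜 => ∑' k, z ^ k • c k)
      (fun k => ContinuousMultilinearMap.mkPiRing 𝕜 (Fin k) (c k) :
        FormalMultilinearSeries 𝕜 𝕜 E) 0 := by
  refine hasFPowerSeriesAt_iff.2 ?_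
  filter_upwards [Metric.ball_mem_nhds (0 : 𝕜) one_pos] with z hz
  rw [mem_ball_zero_iff] at hz
  simpa [FormalMultilinearSeries.coeff] using (summable_pow_smul_of_norm_le hc hz).hasSum

theorem eq_of_tsum_pow_smul_eq (hc : ∀ k, ‖c k‖ ≤ M) {N : ℝ} (hd : ∀ k, ‖d k‖ ≤ N)
    (h : ∀ z ∈ Metric.ball (0 : 𝕜) 1, ∑' k, z ^ k • c k = ∑' k, z ^ k • d k) :
    c = d := by
  have h_series := HasFPowerSeriesAt.eq_formalMultilinearSeries_of_eventually
    (hasFPowerSeriesAt_tsum_pow_smul hc) (hasFPowerSeriesAt_tsum_pow_smul hd)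
    (Filter.eventually_of_mem (Metric.ball_mem_nhds (0 : 𝕜) one_pos) h)
  funext k
  simpa [FormalMultilinearSeries.coeff] using congrArg (fun p => p.coeff k) h_series

end PowerSeries

section Hardy

variable {n : ℕ}

theorem norm_hardyH2_apply_le (f : HardyH2 n) (k : ℕ) : ‖f k‖ ≤ ‖f‖ :=
  lp.norm_apply_le_norm two_ne_zero f k

theorem summable_evalH2 (f : HardyH2 n) {z : ℂ} (hz : ‖z‖ < 1) :
    Summable fun k => z ^ k • f k :=
  summable_pow_smul_of_norm_le (norm_hardyH2_apply_le f) hz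

theorem ext_evalH2 {f g : HardyH2 n}
    (h : ∀ z ∈ Metric.ball (0 : ℂ) 1, evalH2 f z = evalH2 g z) : f = g :=
  lp.ext (eq_of_tsum_pow_smul_eq (norm_hardyH2_apply_le f) (norm_hardyH2_apply_le g) h)

theorem evalH2_single (k : ℕ) (u : EuclideanSpace ℂ (Fin n)) (z : ℂ) :
    evalH2 (lp.single 2 k u) z = z ^ k • u := by
  rw [evalH2, tsum_eq_single k fun j hj => by rw [lp.single_apply_ne _ _ _ hj, smul_zero],
    lp.single_apply_self]

def szegoKernel (w : ℂ) (hw : ‖w‖ < 1) (x : EuclideanSpace ℂ (Fin n)) : HardyH2 n :=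
  ⟨fun k => conj w ^ k • x, by
    refine (memℓp_gen_iff (by norm_num)).2 ?_
    have hw2 : ‖w‖ ^ 2 < 1 := pow_lt_one₀ (norm_nonneg w) hw two_ne_zero
    refine ((summable_geometric_of_lt_one (by positivity) hw2).mul_right (‖x‖ ^ 2)).congr
      fun k => ?_
    rw [ENNReal.toReal_ofNat, Real.rpow_two, norm_smul, norm_pow, RCLike.norm_conj]
    ring⟩

theorem szegoKernel_apply (w : ℂ) (hw : ‖w‖ < 1) (x : EuclideanSpace ℂ (Fin n)) (k : ℕ) :
    szegoKernel w hw x k = conj w ^ k • x :=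
  rfl

theorem szegoKernel_injective (w : ℂ) (hw : ‖w‖ < 1) :
    Function.Injective (szegoKernel (n := n) w hw) := fun x y h => by
  simpa [szegoKernel_apply] using congrArg (fun f : HardyH2 n => f 0) h

theorem szegoKernel_smul (w : ℂ) (hw : ‖w‖ < 1) (a : ℂ) (x : EuclideanSpace ℂ (Fin n)) :
    szegoKernel w hw (a • x) = a • szegoKernel w hw x :=
  lp.ext <| funext fun _ => smul_comm _ a x

theorem szegoKernel_eq_zero_iff (w : ℂ) (hw : ‖w‖ < 1) (x : EuclideanSpace ℂ (Fin n)) :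
    szegoKernel w hw x = 0 ↔ x = 0 :=
  (szegoKernel_injective w hw).eq_iff' <| by
    rw [← zero_smul ℂ (0 : EuclideanSpace ℂ (Fin n)), szegoKernel_smul, zero_smul]

theorem inner_szegoKernel (w : ℂ) (hw : ‖w‖ < 1) (x : EuclideanSpace ℂ (Fin n))
    (g : HardyH2 n) : ⟪szegoKernel w hw x, g⟫_ℂ = ⟪x, evalH2 g w⟫_ℂ := by
  have h_term (k : ℕ) : ⟪szegoKernel w hw x k, g k⟫_ℂ = ⟪x, w ^ k • g k⟫_ℂ := by
    rw [szegoKernel_apply, inner_smul_left, inner_smul_right, map_pow, Complex.conj_conj]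
  rw [lp.inner_eq_tsum, tsum_congr h_term, evalH2]
  exact ((innerSL ℂ x).map_tsum (summable_evalH2 g hw)).symm

def IsMultiplicationOperator (M : HardyH2 n →L[ℂ] HardyH2 n)
    (Φ : ℂ → (EuclideanSpace ℂ (Fin n) →L[ℂ] EuclideanSpace ℂ (Fin n))) : Prop :=
  ∀ f : HardyH2 n, ∀ z ∈ Metric.ball (0 : ℂ) 1, evalH2 (M f) z = Φ z (evalH2 f z)

namespace IsMultiplicationOperator

variable {M N : HardyH2 n →L[ℂ] HardyH2 n}
  {Φ Ψ : ℂ → (EuclideanSpace ℂ (Fin n) →L[ℂ] EuclideanSpace ℂ (Fin n))}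

theorem comp (hM : IsMultiplicationOperator M Φ) (hN : IsMultiplicationOperator N Ψ) :
    IsMultiplicationOperator (M ∘L N) fun z => Φ z ∘L Ψ z := fun f z hz => by
  rw [comp_apply, hM _ z hz, hN _ z hz, comp_apply]

theorem congr (hM : IsMultiplicationOperator M Φ)
    (h : ∀ z ∈ Metric.ball (0 : ℂ) 1, Φ z = Ψ z) :
    IsMultiplicationOperator M Ψ := fun f z hz => by
  rw [hM f z hz, h z hz]

theorem adjoint_szegoKernel (hM : IsMultiplicationOperator M Φ) {w : ℂ} (hw : ‖w‖ < 1)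
    (x : EuclideanSpace ℂ (Fin n)) :
    adjoint M (szegoKernel w hw x) = szegoKernel w hw (adjoint (Φ w) x) :=
  ext_inner_right ℂ fun g => by
    rw [adjoint_inner_left, inner_szegoKernel, inner_szegoKernel,
      hM g w (mem_ball_zero_iff.2 hw), ← adjoint_inner_left]

theorem adjoint_szegoKernel_eq_smul_iff (hM : IsMultiplicationOperator M Φ) {w : ℂ}
    (hw : ‖w‖ < 1) (c : ℂ) (x : EuclideanSpace ℂ (Fin n)) :
    adjoint M (szegoKernel w hw x) = c • szegoKernel w hw x ↔ adjoint (Φ w) x = c • x := by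
  rw [hM.adjoint_szegoKernel, ← szegoKernel_smul, (szegoKernel_injective w hw).eq_iff]

end IsMultiplicationOperator

theorem eq_szegoKernel_of_adjoint_shift_eq {S : HardyH2 n →L[ℂ] HardyH2 n}
    (hS : IsMultiplicationOperator S fun z => z • 1) {w : ℂ} (hw : ‖w‖ < 1) {f : HardyH2 n}
    (hf : adjoint S f = conj w • f) :
    f = szegoKernel w hw (f 0) := by
  have h_single (k : ℕ) (u : EuclideanSpace ℂ (Fin n)) :
      S (lp.single 2 k u) = lp.single 2 (k + 1) u :=
    ext_evalH2 fun z hz => by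
      rw [hS _ z hz, smul_apply, one_apply_eq_self, evalH2_single, evalH2_single, smul_smul,
        pow_succ']
  have h_succ (k : ℕ) : f (k + 1) = conj w • f k :=
    ext_inner_right ℂ fun u => by
      rw [← lp.inner_single_right, ← h_single, ← adjoint_inner_left, hf, inner_smul_left,
        inner_smul_left, lp.inner_single_right]
  refine lp.ext <| funext fun k => ?_
  induction k with
  | zero => simp [szegoKernel_apply]
  | succ k ih => rw [h_succ, ih, szegoKernel_apply, szegoKernel_apply, smul_smul, pow_succ']

theorem hasJointEigenvalue_adjoint_multiplication_iff {MΦ MΨ : HardyH2 n →L[ℂ] HardyH2 n}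
    {Φ Ψ : ℂ → (EuclideanSpace ℂ (Fin n) →L[ℂ] EuclideanSpace ℂ (Fin n))}
    (hMΦ : IsMultiplicationOperator MΦ Φ) (hMΨ : IsMultiplicationOperator MΨ Ψ)
    (hΦΨ : ∀ z ∈ Metric.ball (0 : ℂ) 1, Φ z ∘L Ψ z = z • 1) {a b : ℂ}
    (hw : ‖a * b‖ < 1) :
    HasJointEigenvalue (adjoint MΦ) (adjoint MΨ) (conj a) (conj b) ↔
      HasJointEigenvalue (adjoint (Φ (a * b))) (adjoint (Ψ (a * b))) (conj a) (conj b) := by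
  constructor
  · rintro ⟨f, hf0, hfΦ, hfΨ⟩
    have h_shift : adjoint (MΦ ∘L MΨ) f = conj (a * b) • f := by
      rw [adjoint_comp, comp_apply, hfΦ, map_smul, hfΨ, smul_smul, map_mul, mul_comm]
    have hf := eq_szegoKernel_of_adjoint_shift_eq ((hMΦ.comp hMΨ).congr hΦΨ) hw h_shift
    rw [hf] at hf0 hfΦ hfΨ
    exact ⟨f 0, mt (szegoKernel_eq_zero_iff _ hw _).2 hf0,
      (hMΦ.adjoint_szegoKernel_eq_smul_iff hw _ _).1 hfΦ,
      (hMΨ.adjoint_szegoKernel_eq_smul_iff hw _ _).1 hfΨ⟩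
  · rintro ⟨x, hx, hΦx, hΨx⟩
    exact ⟨szegoKernel _ hw x, mt (szegoKernel_eq_zero_iff _ hw _).1 hx,
      (hMΦ.adjoint_szegoKernel_eq_smul_iff hw _ _).2 hΦx,
      (hMΨ.adjoint_szegoKernel_eq_smul_iff hw _ _).2 hΨx⟩

end Hardy

theorem joint_eigenvalue_multipliers_general {n : ℕ}
    (Φ Ψ : ℂ → (EuclideanSpace ℂ (Fin n) →L[ℂ] EuclideanSpace ℂ (Fin n)))
    (hprod : ∀ z ∈ Metric.ball (0 : ℂ) 1,
      Φ z ∘L Ψ z = z • (1 : EuclideanSpace ℂ (Fin n) →L[ℂ] EuclideanSpace ℂ (Fin n)) ∧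
      Ψ z ∘L Φ z = z • 1)
    (MΦ MΨ : HardyH2 n →L[ℂ] HardyH2 n)
    (hMΦ : ∀ f : HardyH2 n, ∀ z ∈ Metric.ball (0 : ℂ) 1,
      evalH2 (MΦ f) z = Φ z (evalH2 f z))
    (hMΨ : ∀ f : HardyH2 n, ∀ z ∈ Metric.ball (0 : ℂ) 1,
      evalH2 (MΨ f) z = Ψ z (evalH2 f z))
    (z₁ z₂ : ℂ) (hz₁ : ‖z₁‖ < 1) (hz₂ : ‖z₂‖ < 1) :
    (∃ f : HardyH2 n, f ≠ 0 ∧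
        adjoint MΦ f = (starRingEnd ℂ z₁) • f ∧ adjoint MΨ f = (starRingEnd ℂ z₂) • f)
      ↔ (∃ v : EuclideanSpace ℂ (Fin n), v ≠ 0 ∧
          Φ (z₁ * z₂) v = z₁ • v ∧ Ψ (z₁ * z₂) v = z₂ • v) := by
  have hw : ‖z₁ * z₂‖ < 1 := by
    rw [norm_mul]
    exact mul_lt_one_of_nonneg_of_lt_one_left (norm_nonneg _) hz₁ hz₂.le
  obtain ⟨hΦΨ, hΨΦ⟩ := hprod (z₁ * z₂) (mem_ball_zero_iff.2 hw)
  exact (hasJointEigenvalue_adjoint_multiplication_iff hMΦ hMΨ (fun z hz => (hprod z hz).1)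
    hw).trans (hasJointEigenvalue_adjoint_iff hΦΨ hΨΦ)

/-- For analytic `Φ, Ψ : 𝔻 → B(F)` with `Φ(z)Ψ(z) = zI = Ψ(z)Φ(z)`, a point
`(z̄₁, z̄₂) ∈ 𝔻²` is a joint eigenvalue of `(M_Φ*, M_Ψ*)` on `H²(F)` if and only if
`(z₁, z₂)` is a joint eigenvalue of `(Φ(z₁z₂), Ψ(z₁z₂))`. -/
theorem joint_eigenvalue_multipliers {n : ℕ}
    (Φ Ψ : ℂ → (EuclideanSpace ℂ (Fin n) →L[ℂ] EuclideanSpace ℂ (Fin n)))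
    (hΦa : DifferentiableOn ℂ Φ (Metric.ball 0 1))
    (hΨa : DifferentiableOn ℂ Ψ (Metric.ball 0 1))
    (hprod : ∀ z ∈ Metric.ball (0 : ℂ) 1,
      Φ z ∘L Ψ z = z • (1 : EuclideanSpace ℂ (Fin n) →L[ℂ] EuclideanSpace ℂ (Fin n)) ∧
      Ψ z ∘L Φ z = z • 1)
    (MΦ MΨ : HardyH2 n →L[ℂ] HardyH2 n)
    (hMΦ : ∀ f : HardyH2 n, ∀ z ∈ Metric.ball (0 : ℂ) 1,
      evalH2 (MΦ f) z = Φ z (evalH2 f z))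
    (hMΨ : ∀ f : HardyH2 n, ∀ z ∈ Metric.ball (0 : ℂ) 1,
      evalH2 (MΨ f) z = Ψ z (evalH2 f z))
    (z₁ z₂ : ℂ) (hz₁ : ‖z₁‖ < 1) (hz₂ : ‖z₂‖ < 1) :
    (∃ f : HardyH2 n, f ≠ 0 ∧
        adjoint MΦ f = (starRingEnd ℂ z₁) • f ∧ adjoint MΨ f = (starRingEnd ℂ z₂) • f)
      ↔ (∃ v : EuclideanSpace ℂ (Fin n), v ≠ 0 ∧
          Φ (z₁ * z₂) v = z₁ • v ∧ Ψ (z₁ * z₂) v = z₂ • v) :=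
  joint_eigenvalue_multipliers_general Φ Ψ hprod MΦ MΨ hMΦ hMΨ z₁ z₂ hz₁ hz₂

end
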